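/- Let k ≥ 1. Define c_k := inf{ x > 0 : d/dx ( √x · J_{√(2k−1)/2}(x) ) = 0 }, where J_r is the Bessel function of the first kind of order r. Then c_k > 0, and the function H_{k,1}(r) := (√r · J_{√(2k−1)/2}(r)) / (√c_k · J_{√(2k−1)/2}(c_k)) for 0 < r ≤ c_k, extended by 1 for r > c_k, is a well-defined cumulative distribution function on (0,∞): it is continuous, nondecreasing, takes values in [0,1], and equals 1 at c_k. -/

import Mathlib

open Set

/-- Bessel function of the first kind J_ν -/
noncomputable def besselJ (ν : ℝ) (x : ℝ) : ℝ :=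
  ∑' m : ℕ, ((-1:ℝ)^m / ((Nat.factorial m : ℝ) * Real.Gamma ((m:ℝ) + ν + 1))) *
    (x/2) ^ (2*(m:ℝ) + ν)

/-- ν = √(2k-1)/2 -/
noncomputable def besselNu (k : ℕ) : ℝ := Real.sqrt (2*(k:ℝ) - 1) / 2

/-- c_k, smallest positive critical point of x ↦ √x J_ν(x) -/
noncomputable def besselC (k : ℕ) : ℝ :=
  sInf {x : ℝ | 0 < x ∧ deriv (fun y => Real.sqrt y * besselJ (besselNu k) y) x = 0}

/-- H_{k,1}, the least-favourable radial cdf -/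
noncomputable def Hk (k : ℕ) (r : ℝ) : ℝ :=
  if r ≤ besselC k then
    (Real.sqrt r * besselJ (besselNu k) r) /
      (Real.sqrt (besselC k) * besselJ (besselNu k) (besselC k))
  else 1

/-- the least-favourable radial density h_{k,1} (up to scalar): r^{k-1} h_{k,1}(r) ∝ H_{k,1}'(r) -/
noncomputable def hk1 (k : ℕ) (r : ℝ) : ℝ := deriv (Hk k) r / r ^ (k - 1)

/-- ω_k := (2c_k² + k - 1)/(8 c_k) -/
noncomputable def omegak (k : ℕ) : ℝ :=
  (2*(besselC k)^2 + (k:ℝ) - 1) / (8 * besselC k)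

/-! For `x > 0` and `ν > -1`, `u(x) = √x J_ν(x) = x^(ν + 1/2) / 2^ν · F(x²)` with `F` an entire
power series, so `u` is smooth on `(0, ∞)` and solves `u'' = ((ν² - 1/4) / x² - 1) u`; when
`ν > -1/2`, both `u` and `u'` are positive near `0`. If `u'` never vanished on `(0, ∞)`, `u` would
increase and stay positive, whereas for `x ≥ 2|ν|` the equation gives `u'' ≤ -u / 4`, and Sturm
comparison with `sin (x / 2)` forces a zero of `u`. So critical points exist and their infimum `c`
is positive; by the intermediate value theorem `u' > 0` on `(0, c)`, hence `u` is positive and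
increasing on `(0, c]`, and `u / u(c)` extended by `1` is a distribution function. -/

open Real Filter Topology

noncomputable def powSeriesFun (c : ℕ → ℝ) (t : ℝ) : ℝ := ∑' m, c m * t ^ m

def derivCoeff (c : ℕ → ℝ) (m : ℕ) : ℝ := (m + 1) * c (m + 1)

def EntireCoeff (c : ℕ → ℝ) : Prop := ∀ r : ℝ, Summable fun m => ‖c m * r ^ m‖

theorem powSeriesFun_zero (c : ℕ → ℝ) : powSeriesFun c 0 = c 0 := by
  rw [powSeriesFun, tsum_eq_single 0 fun m hm => by simp [hm]]
  simp

namespace EntireCoeff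

variable {c : ℕ → ℝ}

theorem summable (hc : EntireCoeff c) (r : ℝ) : Summable fun m => c m * r ^ m :=
  (hc r).of_norm

theorem deriv (hc : EntireCoeff c) : EntireCoeff (derivCoeff c) := by
  intro r
  refine ((summable_nat_add_iff 1).mpr (hc (2 * |r| + 2))).of_nonneg_of_le
    (fun _ => norm_nonneg _) fun m => ?_
  have hm : ((m : ℝ) + 1) ≤ 2 ^ (m + 1) := by exact_mod_cast (Nat.lt_two_pow_self).le
  have hr : |r| ^ m ≤ (|r| + 1) ^ (m + 1) :=
    (pow_le_pow_left₀ (abs_nonneg r) (by linarith) m).trans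
      (pow_le_pow_right₀ (by linarith [abs_nonneg r]) m.le_succ)
  simp only [derivCoeff, norm_mul, norm_pow, Real.norm_eq_abs]
  rw [abs_of_nonneg (by positivity : (0 : ℝ) ≤ m + 1),
    abs_of_nonneg (by positivity : (0 : ℝ) ≤ 2 * |r| + 2),
    show 2 * |r| + 2 = 2 * (|r| + 1) by ring, mul_pow]
  calc (m + 1) * |c (m + 1)| * |r| ^ m = |c (m + 1)| * ((m + 1) * |r| ^ m) := by ring
    _ ≤ |c (m + 1)| * (2 ^ (m + 1) * (|r| + 1) ^ (m + 1)) := by gcongr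

theorem hasDerivAt (hc : EntireCoeff c) (x : ℝ) :
    HasDerivAt (powSeriesFun c) (powSeriesFun (derivCoeff c) x) x := by
  set R := |x| + 1
  have hbound : Summable fun n : ℕ => ‖c n * (n * R ^ (n - 1))‖ := by
    rw [← summable_nat_add_iff 1]
    refine (hc.deriv R).congr fun m => ?_
    simp only [derivCoeff, Nat.add_sub_cancel, Nat.cast_succ]
    ring_nf
  have key := hasDerivAt_tsum_of_isPreconnected hbound Metric.isOpen_ball
    (convex_ball (0 : ℝ) R).isPreconnected
    (g := fun n y => c n * y ^ n) (g' := fun n y => c n * (n * y ^ (n - 1)))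
    (fun n y _ => (hasDerivAt_pow n y).const_mul (c n))
    (fun n y hy => by
      have hy : |y| ≤ R := by simpa using (mem_ball_zero_iff.mp hy).le
      simp only [Real.norm_eq_abs, abs_mul, abs_pow, abs_of_pos (by positivity : 0 < R)]
      gcongr)
    (Metric.mem_ball_self (by positivity)) (hc.summable 0)
    (y := x) (by simp [R])
  have hderiv : powSeriesFun (derivCoeff c) x = ∑' n : ℕ, c n * (n * x ^ (n - 1)) := by
    rw [tsum_eq_zero_add' ?_]
    · simp [powSeriesFun, derivCoeff, mul_comm, mul_left_comm]
    · simpa [derivCoeff, mul_comm, mul_left_comm] using (hc.deriv x).of_norm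
  rw [hderiv]
  exact key

theorem hasSum_mul_powSeriesFun_derivCoeff (hc : EntireCoeff c) (t : ℝ) :
    HasSum (fun n : ℕ => n * c n * t ^ n) (t * powSeriesFun (derivCoeff c) t) := by
  rw [← hasSum_nat_add_iff' 1]
  simpa [powSeriesFun, derivCoeff, pow_succ, mul_comm, mul_left_comm, mul_assoc] using
    (hc.deriv.summable t).hasSum.mul_left t

theorem continuous (hc : EntireCoeff c) : Continuous (powSeriesFun c) :=
  continuous_iff_continuousAt.2 fun x => (hc.hasDerivAt x).continuousAt

theorem hasDerivAt_comp_sq (hc : EntireCoeff c) (x : ℝ) :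
    HasDerivAt (fun y => powSeriesFun c (y ^ 2))
      (2 * x * powSeriesFun (derivCoeff c) (x ^ 2)) x := by
  refine ((hc.hasDerivAt (x ^ 2)).comp x (hasDerivAt_pow 2 x)).congr_deriv ?_
  push_cast
  ring

end EntireCoeff

noncomputable def besselCoeff (ν : ℝ) (m : ℕ) : ℝ :=
  (-1) ^ m / (m.factorial * Gamma (m + ν + 1) * 4 ^ m)

section BesselSeries

variable {ν : ℝ}

theorem besselCoeff_succ (hν : -1 < ν) (m : ℕ) :
    besselCoeff ν (m + 1) = -besselCoeff ν m / (4 * (m + 1) * (m + ν + 1)) := by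
  have hpos : 0 < (m : ℝ) + ν + 1 := by linarith [(m.cast_nonneg : (0 : ℝ) ≤ m)]
  have hΓ : Gamma ((m + 1 : ℕ) + ν + 1) = (m + ν + 1) * Gamma (m + ν + 1) := by
    rw [← Gamma_add_one hpos.ne']
    push_cast
    ring_nf
  have := Gamma_pos_of_pos hpos
  rw [besselCoeff, besselCoeff, hΓ, Nat.factorial_succ]
  push_cast
  field_simp
  ring

theorem besselCoeff_zero_pos (hν : -1 < ν) : 0 < besselCoeff ν 0 := by
  have := Gamma_pos_of_pos (show 0 < (0 : ℝ) + ν + 1 by linarith)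
  simp only [besselCoeff, pow_zero, Nat.factorial_zero, Nat.cast_one, Nat.cast_zero]
  positivity

theorem entireCoeff_besselCoeff (hν : -1 < ν) : EntireCoeff (besselCoeff ν) := by
  intro r
  refine summable_of_ratio_norm_eventually_le (r := 1 / 2) (by norm_num) ?_
  filter_upwards [(tendsto_natCast_atTop_atTop (R := ℝ)).eventually_ge_atTop |r|] with m hm
  have hpos : 0 < (m : ℝ) + ν + 1 := by linarith [(m.cast_nonneg : (0 : ℝ) ≤ m)]
  have hden : 2 * |r| ≤ 4 * (m + 1) * (m + ν + 1) := by nlinarith [abs_nonneg r]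
  rw [norm_norm, norm_norm, besselCoeff_succ hν, norm_mul, norm_mul, norm_div, norm_neg,
    norm_pow, norm_pow, Real.norm_of_nonneg (by positivity : (0 : ℝ) ≤ 4 * (m + 1) * (m + ν + 1)),
    Real.norm_eq_abs r, pow_succ]
  rw [div_mul_eq_mul_div, div_le_iff₀ (by positivity)]
  have : 0 ≤ ‖besselCoeff ν m‖ * |r| ^ m := by positivity
  nlinarith

theorem besselSeries_ode (hν : -1 < ν) (t : ℝ) :
    4 * (t * powSeriesFun (derivCoeff (derivCoeff (besselCoeff ν))) t)
      + 4 * (ν + 1) * powSeriesFun (derivCoeff (besselCoeff ν)) t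
      + powSeriesFun (besselCoeff ν) t = 0 := by
  have ha := entireCoeff_besselCoeff hν
  have hterm : ∀ n : ℕ, 4 * (n * derivCoeff (besselCoeff ν) n * t ^ n)
      + 4 * (ν + 1) * (derivCoeff (besselCoeff ν) n * t ^ n) + besselCoeff ν n * t ^ n = 0 := by
    intro n
    have hpos : 0 < (n : ℝ) + ν + 1 := by linarith [(n.cast_nonneg : (0 : ℝ) ≤ n)]
    rw [derivCoeff, besselCoeff_succ hν]
    field_simp
    ring
  have hsum := (((ha.deriv.hasSum_mul_powSeriesFun_derivCoeff t).mul_left 4).add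
    ((ha.deriv.summable t).hasSum.mul_left (4 * (ν + 1)))).add (ha.summable t).hasSum
  simp only [hterm] at hsum
  exact hsum.unique hasSum_zero

end BesselSeries

noncomputable def sqrtBesselJ (ν x : ℝ) : ℝ := √x * besselJ ν x

noncomputable def sqrtBesselJDeriv (ν x : ℝ) : ℝ :=
  x ^ (ν + 1 / 2) / 2 ^ ν * ((ν + 1 / 2) / x * powSeriesFun (besselCoeff ν) (x ^ 2)
    + 2 * x * powSeriesFun (derivCoeff (besselCoeff ν)) (x ^ 2))

section SqrtBesselJ

variable {ν x : ℝ}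

theorem besselJ_eq_rpow_mul_powSeriesFun (hx : 0 < x) :
    besselJ ν x = (x / 2) ^ ν * powSeriesFun (besselCoeff ν) (x ^ 2) := by
  rw [besselJ, powSeriesFun, ← tsum_mul_left]
  refine tsum_congr fun m => ?_
  rw [rpow_add (by positivity), show 2 * (m : ℝ) = (2 * m : ℕ) by push_cast; ring,
    rpow_natCast, pow_mul, show (x / 2) ^ 2 = x ^ 2 / 4 by ring, div_pow, besselCoeff]
  ring

theorem sqrtBesselJ_eq (hx : 0 < x) :
    sqrtBesselJ ν x = x ^ (ν + 1 / 2) / 2 ^ ν * powSeriesFun (besselCoeff ν) (x ^ 2) := by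
  rw [sqrtBesselJ, besselJ_eq_rpow_mul_powSeriesFun hx, div_rpow hx.le zero_le_two,
    rpow_add hx, sqrt_eq_rpow]
  ring

theorem hasDerivAt_rpow_div_const (hx : 0 < x) (p C : ℝ) :
    HasDerivAt (fun y => y ^ p / C) (x ^ p / C * (p / x)) x := by
  refine ((hasDerivAt_rpow_const (p := p) (Or.inl hx.ne')).div_const C).congr_deriv ?_
  rw [rpow_sub_one hx.ne']
  ring

theorem hasDerivAt_sqrtBesselJ (hν : -1 < ν) (hx : 0 < x) :
    HasDerivAt (sqrtBesselJ ν) (sqrtBesselJDeriv ν x) x := by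
  have h := (hasDerivAt_rpow_div_const hx (ν + 1 / 2) (2 ^ ν)).fun_mul
    ((entireCoeff_besselCoeff hν).hasDerivAt_comp_sq x)
  refine (h.congr_of_eventuallyEq ?_).congr_deriv ?_
  · filter_upwards [Ioi_mem_nhds hx] with y hy using sqrtBesselJ_eq hy
  · rw [sqrtBesselJDeriv]
    ring

theorem hasDerivAt_sqrtBesselJDeriv (hν : -1 < ν) (hx : 0 < x) :
    HasDerivAt (sqrtBesselJDeriv ν) (((ν ^ 2 - 1 / 4) / x ^ 2 - 1) * sqrtBesselJ ν x) x := by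
  have ha := entireCoeff_besselCoeff hν
  have h := (hasDerivAt_rpow_div_const hx (ν + 1 / 2) (2 ^ ν)).fun_mul
    ((((hasDerivAt_inv hx.ne').const_mul (ν + 1 / 2)).fun_mul
      (ha.hasDerivAt_comp_sq x)).fun_add
      (((hasDerivAt_id' x).const_mul 2).fun_mul (ha.deriv.hasDerivAt_comp_sq x)))
  refine (h.congr_of_eventuallyEq (.of_eq (funext fun y => ?_))).congr_deriv ?_
  · simp only [sqrtBesselJDeriv, div_eq_mul_inv]
  rw [sqrtBesselJ_eq hx]
  have hode := besselSeries_ode hν (x ^ 2)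
  field_simp
  linear_combination 16 * x ^ 2 * hode

end SqrtBesselJ

theorem IsPreconnected.pos_of_forall_ne_zero {α : Type*} [TopologicalSpace α] {s : Set α}
    {f : α → ℝ} (hs : IsPreconnected s) (hf : ContinuousOn f s) (hf0 : ∀ x ∈ s, f x ≠ 0)
    {a : α} (ha : a ∈ s) (hfa : 0 < f a) {x : α} (hx : x ∈ s) : 0 < f x := by
  by_contra! hfx
  obtain ⟨y, hy, hy0⟩ := hs.intermediate_value hx ha hf ⟨hfx, hfa.le⟩
  exact hf0 y hy hy0

/-- Sturm comparison with `sin (ω (x - a))`, which solves `y'' = -ω² y` and vanishes at both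
ends of `[a, a + π / ω]`: their Wronskian is antitone there. -/
theorem exists_nonpos_of_hasDerivAt_le_neg_sq_mul {u u' u'' : ℝ → ℝ} {a ω : ℝ} (hω : 0 < ω)
    (hu : ∀ x ∈ Icc a (a + π / ω), HasDerivAt u (u' x) x)
    (hu' : ∀ x ∈ Icc a (a + π / ω), HasDerivAt u' (u'' x) x)
    (hu'' : ∀ x ∈ Icc a (a + π / ω), u'' x ≤ -ω ^ 2 * u x) :
    ∃ x ∈ Icc a (a + π / ω), u x ≤ 0 := by
  by_contra! hpos
  set b := a + π / ω
  have hab : a ≤ b := le_add_of_nonneg_right (by positivity)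
  have hπ : ω * (b - a) = π := by simp only [b, add_sub_cancel_left]; field_simp
  set W := fun x => u' x * sin (ω * (x - a)) - ω * u x * cos (ω * (x - a))
  have hW : ∀ x ∈ Icc a b, HasDerivAt W ((u'' x + ω ^ 2 * u x) * sin (ω * (x - a))) x := by
    intro x hx
    have hlin : HasDerivAt (fun y => ω * (y - a)) ω x := by
      simpa using ((hasDerivAt_id x).sub_const a).const_mul ω
    refine (((hu' x hx).mul (hlin.sin)).sub (((hu x hx).const_mul ω).mul hlin.cos)).congr_deriv ?_
    ring
  have hanti : AntitoneOn W (Icc a b) := by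
    refine antitoneOn_of_hasDerivWithinAt_nonpos (convex_Icc a b)
      (fun x hx => (hW x hx).continuousAt.continuousWithinAt)
      (fun x hx => (hW x (interior_subset hx)).hasDerivWithinAt) fun x hx => ?_
    rw [interior_Icc] at hx
    refine mul_nonpos_of_nonpos_of_nonneg (by linarith [hu'' x (Ioo_subset_Icc_self hx)])
      (sin_nonneg_of_nonneg_of_le_pi ?_ ?_)
    · nlinarith [hx.1]
    · nlinarith [hx.2]
  have hWab := hanti (left_mem_Icc.2 hab) (right_mem_Icc.2 hab) hab
  simp only [W, sub_self, mul_zero, sin_zero, cos_zero, hπ, sin_pi, cos_pi] at hWab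
  nlinarith [hpos a (left_mem_Icc.2 hab), hpos b (right_mem_Icc.2 hab)]

section CriticalPoint

variable {ν : ℝ}

theorem exists_forall_sqrtBesselJ_pos_near_zero (hν : -1 / 2 < ν) :
    ∃ b > 0, ∀ x ∈ Ioo 0 b, 0 < sqrtBesselJ ν x ∧ 0 < sqrtBesselJDeriv ν x := by
  have ha := entireCoeff_besselCoeff (show -1 < ν by linarith)
  set P := fun t => (ν + 1 / 2) * powSeriesFun (besselCoeff ν) t
    + 2 * t * powSeriesFun (derivCoeff (besselCoeff ν)) t
  have hF0 : 0 < powSeriesFun (besselCoeff ν) 0 := by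
    rw [powSeriesFun_zero]
    exact besselCoeff_zero_pos (by linarith)
  have hP0 : 0 < P 0 := by
    simp only [P, mul_zero, zero_mul, add_zero]
    exact mul_pos (by linarith) hF0
  have hPc : Continuous P := by
    have := ha.continuous
    have := ha.deriv.continuous
    fun_prop
  have hev : ∀ᶠ x in 𝓝 (0 : ℝ), 0 < powSeriesFun (besselCoeff ν) (x ^ 2) ∧ 0 < P (x ^ 2) := by
    have h0 : Tendsto (fun x : ℝ => x ^ 2) (𝓝 0) (𝓝 0) := by
      simpa using (continuous_pow 2).tendsto (0 : ℝ)
    exact (((ha.continuous.tendsto 0).comp h0).eventually_const_lt hF0).and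
      (((hPc.tendsto 0).comp h0).eventually_const_lt hP0)
  obtain ⟨b, hb, hball⟩ := Metric.eventually_nhds_iff.mp hev
  refine ⟨b, hb, fun x hx => ?_⟩
  obtain ⟨hFx, hPx⟩ := hball (by rw [Real.dist_eq, sub_zero, abs_of_pos hx.1]; exact hx.2)
  have hx0 := hx.1
  have hderiv : sqrtBesselJDeriv ν x = x ^ (ν + 1 / 2) / 2 ^ ν / x * P (x ^ 2) := by
    simp only [sqrtBesselJDeriv, P]
    field_simp
  rw [sqrtBesselJ_eq hx0, hderiv]
  constructor <;> positivity

theorem continuousOn_sqrtBesselJ (hν : -1 < ν) : ContinuousOn (sqrtBesselJ ν) (Ioi 0) :=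
  fun _ hx => (hasDerivAt_sqrtBesselJ hν hx).continuousAt.continuousWithinAt

theorem continuousOn_sqrtBesselJDeriv (hν : -1 < ν) : ContinuousOn (sqrtBesselJDeriv ν) (Ioi 0) :=
  fun _ hx => (hasDerivAt_sqrtBesselJDeriv hν hx).continuousAt.continuousWithinAt

theorem strictMonoOn_sqrtBesselJ_of_deriv_pos (hν : -1 < ν) {s : Set ℝ} (hs : Convex ℝ s)
    (hs0 : s ⊆ Ioi 0) (hpos : ∀ x ∈ interior s, 0 < sqrtBesselJDeriv ν x) :
    StrictMonoOn (sqrtBesselJ ν) s :=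
  strictMonoOn_of_hasDerivWithinAt_pos hs ((continuousOn_sqrtBesselJ hν).mono hs0)
    (fun _ hx => (hasDerivAt_sqrtBesselJ hν (hs0 (interior_subset hx))).hasDerivWithinAt) hpos

theorem exists_sqrtBesselJDeriv_eq_zero (hν : -1 / 2 < ν) :
    ∃ x, 0 < x ∧ sqrtBesselJDeriv ν x = 0 := by
  have hν' : -1 < ν := by linarith
  obtain ⟨b, hb, hsmall⟩ := exists_forall_sqrtBesselJ_pos_near_zero hν
  by_contra! hne
  have hb2 : b / 2 ∈ Ioo 0 b := ⟨by positivity, by linarith⟩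
  have hmono : StrictMonoOn (sqrtBesselJ ν) (Ioi 0) := by
    refine strictMonoOn_sqrtBesselJ_of_deriv_pos hν' (convex_Ioi 0) subset_rfl fun x hx => ?_
    rw [interior_Ioi] at hx
    exact isPreconnected_Ioi.pos_of_forall_ne_zero (continuousOn_sqrtBesselJDeriv hν') hne
      hb2.1 (hsmall _ hb2).2 hx
  obtain ⟨a, ha⟩ : ∃ a, a = b / 2 + 2 * |ν| := ⟨_, rfl⟩
  have hIcc : ∀ x ∈ Icc a (a + π / (1 / 2)), b / 2 ≤ x ∧ 2 * |ν| ≤ x := fun x hx =>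
    ⟨by linarith [hx.1, abs_nonneg ν], by linarith [hx.1, hb2.1]⟩
  have hpos : ∀ x ∈ Icc a (a + π / (1 / 2)), 0 < sqrtBesselJ ν x := fun x hx =>
    (hsmall _ hb2).1.trans_le <| hmono.monotoneOn hb2.1 (hb2.1.trans_le (hIcc x hx).1) (hIcc x hx).1
  obtain ⟨x, hx, hux⟩ := exists_nonpos_of_hasDerivAt_le_neg_sq_mul (a := a) (ω := 1 / 2)
    (u' := sqrtBesselJDeriv ν) (by norm_num)
    (fun x hx => hasDerivAt_sqrtBesselJ hν' (hb2.1.trans_le (hIcc x hx).1))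
    (fun x hx => hasDerivAt_sqrtBesselJDeriv hν' (hb2.1.trans_le (hIcc x hx).1))
    (fun x hx => by
      have hx0 : 0 < x := hb2.1.trans_le (hIcc x hx).1
      have hνx : 4 * ν ^ 2 ≤ x ^ 2 := by nlinarith [sq_abs ν, abs_nonneg ν, (hIcc x hx).2]
      have hcoef : (ν ^ 2 - 1 / 4) / x ^ 2 ≤ 3 / 4 := by
        rw [div_le_iff₀ (by positivity)]
        nlinarith
      nlinarith [hpos x hx])
  exact (hpos x hx).not_ge hux

end CriticalPoint

noncomputable def firstCriticalPoint (ν : ℝ) : ℝ :=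
  sInf {x | 0 < x ∧ deriv (sqrtBesselJ ν) x = 0}

section FirstCriticalPoint

variable {ν x : ℝ}

theorem firstCriticalPoint_eq (hν : -1 < ν) :
    firstCriticalPoint ν = sInf {x | 0 < x ∧ sqrtBesselJDeriv ν x = 0} := by
  rw [firstCriticalPoint]
  congr 1
  exact Set.ext fun x => and_congr_right fun hx => by rw [(hasDerivAt_sqrtBesselJ hν hx).deriv]

theorem exists_near_zero_le_firstCriticalPoint (hν : -1 / 2 < ν) :
    ∃ b > 0, b ≤ firstCriticalPoint ν ∧
      ∀ x ∈ Ioo 0 b, 0 < sqrtBesselJ ν x ∧ 0 < sqrtBesselJDeriv ν x := by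
  obtain ⟨b, hb, hsmall⟩ := exists_forall_sqrtBesselJ_pos_near_zero hν
  refine ⟨b, hb, ?_, hsmall⟩
  rw [firstCriticalPoint_eq (by linarith)]
  refine le_csInf (exists_sqrtBesselJDeriv_eq_zero hν) fun x ⟨hx, hx0⟩ => ?_
  by_contra! hxb
  exact (hsmall x ⟨hx, hxb⟩).2.ne' hx0

theorem firstCriticalPoint_pos (hν : -1 / 2 < ν) : 0 < firstCriticalPoint ν :=
  let ⟨_, hb, hbc, _⟩ := exists_near_zero_le_firstCriticalPoint hν
  hb.trans_le hbc

theorem sqrtBesselJDeriv_pos (hν : -1 / 2 < ν) (hx : x ∈ Ioo 0 (firstCriticalPoint ν)) :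
    0 < sqrtBesselJDeriv ν x := by
  have hν' : -1 < ν := by linarith
  obtain ⟨b, hb, hbc, hsmall⟩ := exists_near_zero_le_firstCriticalPoint hν
  have hb2 : b / 2 ∈ Ioo 0 b := ⟨by positivity, by linarith⟩
  refine isPreconnected_Ioo.pos_of_forall_ne_zero
    ((continuousOn_sqrtBesselJDeriv hν').mono Ioo_subset_Ioi_self) (fun y hy hy0 => ?_)
    ⟨hb2.1, hb2.2.trans_le hbc⟩ (hsmall _ hb2).2 hx
  rw [mem_Ioo, firstCriticalPoint_eq hν'] at hy
  exact notMem_of_lt_csInf hy.2 ⟨0, fun z hz => hz.1.le⟩ ⟨hy.1, hy0⟩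

theorem strictMonoOn_sqrtBesselJ (hν : -1 / 2 < ν) :
    StrictMonoOn (sqrtBesselJ ν) (Ioc 0 (firstCriticalPoint ν)) :=
  strictMonoOn_sqrtBesselJ_of_deriv_pos (by linarith) (convex_Ioc 0 _) Ioc_subset_Ioi_self
    fun _ hx => sqrtBesselJDeriv_pos hν (by rwa [interior_Ioc] at hx)

theorem sqrtBesselJ_pos (hν : -1 / 2 < ν) (hx : x ∈ Ioc 0 (firstCriticalPoint ν)) :
    0 < sqrtBesselJ ν x := by
  obtain ⟨b, hb, -, hsmall⟩ := exists_near_zero_le_firstCriticalPoint hν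
  have hy : min x (b / 2) ∈ Ioo 0 b :=
    ⟨lt_min hx.1 (by positivity), (min_le_right _ _).trans_lt (by linarith)⟩
  exact (hsmall _ hy).1.trans_le <| (strictMonoOn_sqrtBesselJ hν).monotoneOn
    ⟨hy.1, (min_le_left _ _).trans hx.2⟩ hx (min_le_left _ _)

end FirstCriticalPoint

noncomputable def normalizedUpTo (g : ℝ → ℝ) (c r : ℝ) : ℝ := if r ≤ c then g r / g c else 1

section NormalizedUpTo

variable {g : ℝ → ℝ} {c : ℝ}

theorem normalizedUpTo_self (hgc : g c ≠ 0) : normalizedUpTo g c c = 1 := by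
  simp [normalizedUpTo, hgc]

theorem continuousOn_normalizedUpTo (hg : ContinuousOn g (Ioc 0 c))
    (hpos : ∀ x ∈ Ioc 0 c, 0 < g x) : ContinuousOn (normalizedUpTo g c) (Ioi 0) := by
  refine ContinuousOn.if (fun r ⟨hr, hrc⟩ => ?_) ?_ continuousOn_const
  · rw [show {r : ℝ | r ≤ c} = Iic c from rfl, frontier_Iic, mem_singleton_iff] at hrc
    subst hrc
    simp [(hpos r ⟨hr, le_rfl⟩).ne']
  · rw [show {r : ℝ | r ≤ c} = Iic c from rfl, closure_Iic, Ioi_inter_Iic]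
    exact hg.div_const _

theorem monotoneOn_normalizedUpTo (hg : MonotoneOn g (Ioc 0 c))
    (hpos : ∀ x ∈ Ioc 0 c, 0 < g x) : MonotoneOn (normalizedUpTo g c) (Ioi 0) := by
  intro x hx y hy hxy
  simp only [normalizedUpTo]
  split_ifs with hxc hyc hyc
  · have hc : c ∈ Ioc 0 c := ⟨lt_of_lt_of_le hx hxc, le_rfl⟩
    exact div_le_div_of_nonneg_right (hg ⟨hx, hxc⟩ ⟨hy, hyc⟩ hxy) (hpos c hc).le
  · have hc : c ∈ Ioc 0 c := ⟨lt_of_lt_of_le hx hxc, le_rfl⟩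
    exact (div_le_one (hpos c hc)).2 (hg ⟨hx, hxc⟩ hc hxc)
  · exact absurd (hxy.trans hyc) hxc
  · exact le_rfl

theorem normalizedUpTo_mem_Icc (hg : MonotoneOn g (Ioc 0 c)) (hpos : ∀ x ∈ Ioc 0 c, 0 < g x)
    {r : ℝ} (hr : 0 < r) : normalizedUpTo g c r ∈ Icc 0 1 := by
  rw [normalizedUpTo]
  split_ifs with hrc
  · have hc : c ∈ Ioc 0 c := ⟨hr.trans_le hrc, le_rfl⟩
    exact ⟨div_nonneg (hpos r ⟨hr, hrc⟩).le (hpos c hc).le,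
      (div_le_one (hpos c hc)).2 (hg ⟨hr, hrc⟩ hc hrc)⟩
  · exact ⟨zero_le_one, le_rfl⟩

end NormalizedUpTo

theorem stmt9_general (k : ℕ) :
    0 < besselC k ∧
    ContinuousOn (Hk k) (Set.Ioi 0) ∧
    MonotoneOn (Hk k) (Set.Ioi 0) ∧
    (∀ r : ℝ, 0 < r → Hk k r ∈ Set.Icc (0:ℝ) 1) ∧
    Hk k (besselC k) = 1 := by
  have hν : -1 / 2 < besselNu k := by
    rw [besselNu]
    linarith [sqrt_nonneg (2 * (k : ℝ) - 1)]
  set ν := besselNu k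
  have hH : Hk k = normalizedUpTo (sqrtBesselJ ν) (firstCriticalPoint ν) := rfl
  have hc : besselC k = firstCriticalPoint ν := rfl
  have hpos : ∀ x ∈ Ioc 0 (firstCriticalPoint ν), 0 < sqrtBesselJ ν x := fun _ hx =>
    sqrtBesselJ_pos hν hx
  have hmono := (strictMonoOn_sqrtBesselJ hν).monotoneOn
  have hcont : ContinuousOn (sqrtBesselJ ν) (Ioc 0 (firstCriticalPoint ν)) :=
    (continuousOn_sqrtBesselJ (by linarith)).mono Ioc_subset_Ioi_self
  rw [hH, hc]
  exact ⟨firstCriticalPoint_pos hν, continuousOn_normalizedUpTo hcont hpos,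
    monotoneOn_normalizedUpTo hmono hpos, fun _ hr => normalizedUpTo_mem_Icc hmono hpos hr,
    normalizedUpTo_self (hpos _ ⟨firstCriticalPoint_pos hν, le_rfl⟩).ne'⟩

/-- c_k > 0 and H_{k,1} is a well-defined cdf on (0,∞). -/
theorem stmt9 (k : ℕ) (hk : 1 ≤ k) :
    0 < besselC k ∧
    ContinuousOn (Hk k) (Set.Ioi 0) ∧
    MonotoneOn (Hk k) (Set.Ioi 0) ∧
    (∀ r : ℝ, 0 < r → Hk k r ∈ Set.Icc (0:ℝ) 1) ∧
    Hk k (besselC k) = 1 :=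
  stmt9_general k
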